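/- Suppose the chain of fields satisfies: for all i < i' in J, [k_{i'} : k_i] is infinite, and suppose J has elements α < β < γ. If P is an object of C equipped with morphisms π_n : P → M^α (n ∈ ℕ) such that for every object W of C the map Hom_C(W, P) → Hom_C(W, M^α)^ℕ, ψ ↦ (π_n ∘ ψ), is a bijection (i.e., P is a product of countably many copies of M^α in C restricted to grounded test objects M^β, M^γ), then P is not β-grounded: there is no β ∈ J with β > α such that P is β-grounded. In particular, a countable product of copies of M^α does not exist in the category G of grounded objects. -/

import Mathlib

/-!
Testing the product property against `M^γ` for some `γ > β` shows that `p ↦ (π_n p)_n` maps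
`P_γ` onto `k_γ^ℕ`. If `P` were `β`-grounded, each `p ∈ P_γ` would be a finite combination
`∑ aᵢ • t(qᵢ)` of elements coming from level `β`, so every coordinate of its image would lie in
the `k_β`-span of the finitely many `aᵢ`. A `k_β`-linearly independent sequence in `k_γ`, which
exists because `[k_γ : k_β]` is infinite, is therefore not in the image.
-/
set_option linter.unusedVariables false

structure ChainObj {J : Type} [LinearOrder J] (k : J → Type) [∀ i, Field (k i)]
    (f : ∀ i j, i ≤ j → k i →+* k j) where
  V : J → Type
  [acg : ∀ i, AddCommGroup (V i)]
  [mod : ∀ i, Module (k i) (V i)]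
  t : ∀ i j (h : i ≤ j), V i →ₛₗ[f i j h] V j
  t_id : ∀ i (x : V i), t i i le_rfl x = x
  t_comp : ∀ i j l (h₁ : i ≤ j) (h₂ : j ≤ l) (x : V i),
    t j l h₂ (t i j h₁ x) = t i l (h₁.trans h₂) x

attribute [instance] ChainObj.acg ChainObj.mod

variable {J : Type} [LinearOrder J] {k : J → Type} [∀ i, Field (k i)]
  {f : ∀ i j, i ≤ j → k i →+* k j}

@[ext]
structure ChainHom (V W : ChainObj k f) where
  app : ∀ i, V.V i →ₗ[k i] W.V i
  comm : ∀ i j (h : i ≤ j) (x : V.V i), W.t i j h (app i x) = app j (V.t i j h x)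

def ChainHom.comp {U V W : ChainObj k f} (g : ChainHom V W) (h : ChainHom U V) :
    ChainHom U W where
  app i := (g.app i).comp (h.app i)
  comm i j hij x := by simp [g.comm, h.comm]

def ChainHom.id (V : ChainObj k f) : ChainHom V V where
  app i := LinearMap.id
  comm i j hij x := rfl

def ChainHom.zero (V W : ChainObj k f) : ChainHom V W where
  app i := 0
  comm i j hij x := by simp

/-- An object `V` is `α`-grounded if for every `β > α` the component `V β` is spanned
over `k β` by the image of the transition map from level `α`. -/
def IsGrounded (α : J) (V : ChainObj k f) : Prop :=
  ∀ β (h : α < β), Submodule.span (k β) (Set.range (V.t α β h.le)) = ⊤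

/-- The component submodule of the representing object `M^j`: zero below `j`, everything
from `j` on. -/
def MjSub (k : J → Type) [∀ i, Field (k i)] (j i : J) : Submodule (k i) (k i) :=
  if i < j then ⊥ else ⊤

theorem one_mem_MjSub {j i : J} (h : j ≤ i) : (1 : k i) ∈ MjSub k j i := by
  simp [MjSub, not_lt.mpr h]

/-- The object `M^j`, with `M^j_i = 0` for `i < j` and `M^j_i = k_i` for `i ≥ j`, the
transition maps being the field inclusions. -/
def Mj (hf_id : ∀ i (x : k i), f i i le_rfl x = x)
    (hf_comp : ∀ i j l (h₁ : i ≤ j) (h₂ : j ≤ l) (x : k i),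
      f j l h₂ (f i j h₁ x) = f i l (h₁.trans h₂) x)
    (j : J) : ChainObj k f where
  V i := MjSub k j i
  t i i' h :=
    { toFun := fun x => ⟨f i i' h x.1, by
        by_cases h' : i' < j
        · have hx : x.1 = 0 := by
            have hx2 := x.2
            simp only [MjSub, if_pos (lt_of_le_of_lt h h'), Submodule.mem_bot] at hx2
            exact hx2
          simp [MjSub, if_pos h', hx]
        · simp [MjSub, if_neg h']⟩
      map_add' := by intro a b; apply Subtype.ext; simp
      map_smul' := by intro c a; apply Subtype.ext; simp [Submodule.coe_smul] }
  t_id i x := by apply Subtype.ext; simp [hf_id]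
  t_comp i j' l h₁ h₂ x := by apply Subtype.ext; simp [hf_comp]

theorem exists_linearIndependent_nat_of_not_finite {K V : Type*} [DivisionRing K]
    [AddCommGroup V] [Module K V] (h : ¬ Module.Finite K V) :
    ∃ x : ℕ → V, LinearIndependent K x := by
  have : Infinite (Module.Basis.ofVectorSpaceIndex K V) :=
    not_finite_iff_infinite.1 fun _ => h (.of_basis (Module.Basis.ofVectorSpace K V))
  exact ⟨_, (Module.Basis.ofVectorSpace K V).linearIndependent.comp _
    (Infinite.natEmbedding _).injective⟩

theorem RingHom.exists_seq_not_mem_finite_span {K L : Type*} [Field K] [Field L]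
    (g : K →+* L) (h : ∀ s : Finset L, ∃ x : L, ¬ ∃ c : L → K, x = ∑ a ∈ s, g (c a) * a) :
    ∃ x : ℕ → L, ∀ (m : ℕ) (a : Fin m → L),
      ¬ ∀ n, ∃ c : Fin m → K, x n = ∑ i, g (c i) * a i := by
  let _ := g.toAlgebra
  have not_finite : ¬ Module.Finite K L := by
    rintro ⟨s, hs⟩
    obtain ⟨x, hx⟩ := h s
    obtain ⟨c, -, hc⟩ :=
      Submodule.mem_span_finset.1 (hs ▸ Submodule.mem_top : x ∈ Submodule.span K s)
    exact hx ⟨c, hc.symm⟩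
  obtain ⟨x, hx⟩ := exists_linearIndependent_nat_of_not_finite not_finite
  refine ⟨x, fun m a hxa => not_finite_iff_infinite.2 inferInstance
    (hx.finite_of_le_span_finite x (Set.range a) ?_)⟩
  rintro _ ⟨n, rfl⟩
  obtain ⟨c, hc⟩ := hxa n
  rw [hc]
  exact Submodule.sum_mem _ fun i _ => Submodule.smul_mem _ _ (Submodule.subset_span ⟨i, rfl⟩)

namespace Mj

variable {hf_id : ∀ i (x : k i), f i i le_rfl x = x}
  {hf_comp : ∀ i j l (h₁ : i ≤ j) (h₂ : j ≤ l) (x : k i),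
    f j l h₂ (f i j h₁ x) = f i l (h₁.trans h₂) x}

def val (j i : J) : (Mj hf_id hf_comp j).V i →ₗ[k i] k i :=
  (MjSub k j i).subtype

def mk {j i : J} (h : j ≤ i) (x : k i) : (Mj hf_id hf_comp j).V i :=
  (⟨x, by simp [MjSub, not_lt.2 h]⟩ : MjSub k j i)

@[simp]
theorem val_mk {j i : J} (h : j ≤ i) (x : k i) :
    val (hf_id := hf_id) (hf_comp := hf_comp) j i (mk h x) = x := rfl

theorem val_t {j i i' : J} (h : i ≤ i') (y : (Mj hf_id hf_comp j).V i) :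
    val j i' ((Mj hf_id hf_comp j).t i i' h y) = f i i' h (val j i y) := rfl

theorem val_eq_zero_of_lt {j i : J} (h : i < j) (y : (Mj hf_id hf_comp j).V i) :
    val j i y = 0 := by
  have hy := (y : MjSub k j i).2
  simp only [MjSub, if_pos h, Submodule.mem_bot] at hy
  exact hy

def homOfElem {δ : J} {W : ChainObj k f} (w : W.V δ) : ChainHom (Mj hf_id hf_comp δ) W where
  app i := if h : δ ≤ i then (val δ i).smulRight (W.t δ i h w) else 0
  comm i j hij x := by
    by_cases hi : δ ≤ i
    · simp [hi, hi.trans hij, W.t_comp, val_t]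
    · by_cases hj : δ ≤ j
      · simp [hi, hj, val_t, val_eq_zero_of_lt (not_le.1 hi)]
      · simp [hi, hj]

theorem homOfElem_app_mk_one {δ : J} {W : ChainObj k f} (w : W.V δ) :
    (homOfElem (hf_id := hf_id) (hf_comp := hf_comp) w).app δ (mk le_rfl 1) = w := by
  simp [homOfElem, W.t_id]

theorem exists_val_app_eq_of_surjective {α δ : J} (hαδ : α ≤ δ) {ι : Type*}
    {P : ChainObj k f} (π : ι → ChainHom P (Mj hf_id hf_comp α))
    (hπ : Function.Surjective
      (fun ψ : ChainHom (Mj hf_id hf_comp δ) P => fun n => (π n).comp ψ))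
    (c : ι → k δ) : ∃ p : P.V δ, ∀ n, val α δ ((π n).app δ p) = c n := by
  obtain ⟨ψ, hψ⟩ := hπ fun n => homOfElem (mk hαδ (c n))
  refine ⟨ψ.app δ (mk le_rfl 1), fun n => ?_⟩
  have := congrArg (fun g => val α δ (g.app δ (mk le_rfl 1))) (congrFun hψ n)
  simp only [homOfElem_app_mk_one, val_mk] at this
  exact this

theorem exists_forall_val_app_eq_sum {α β γ : J} (hβγ : β ≤ γ) {P : ChainObj k f}
    {p : P.V γ} (hp : p ∈ Submodule.span (k γ) (Set.range (P.t β γ hβγ))) :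
    ∃ (m : ℕ) (a : Fin m → k γ), ∀ φ : ChainHom P (Mj hf_id hf_comp α),
      ∃ c : Fin m → k β, val α γ (φ.app γ p) = ∑ i, f β γ hβγ (c i) * a i := by
  obtain ⟨m, a, v, rfl⟩ := Submodule.mem_span_set'.1 hp
  choose q hq using fun i => (v i).2
  refine ⟨m, a, fun φ => ⟨fun i => val α β (φ.app β (q i)), ?_⟩⟩
  simp only [map_sum, map_smul, smul_eq_mul, ← hq, ← φ.comm, val_t, mul_comm]

end Mj

/-- Suppose every extension `k_i ⊆ k_{i'}` (`i < i'`) in the chain has infinite degree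
(no finite subset of `k_{i'}` spans it over `k_i`), and every element of `J` has a
strictly larger one.  If `P` is an object of `C` equipped with morphisms
`π n : P → M^α` (`n : ℕ`) such that for every object `W` the map
`ψ ↦ (n ↦ π n ∘ ψ)` is a bijection `Hom(W, P) ≃ Hom(W, M^α)^ℕ` (i.e. `P` is a product
of countably many copies of `M^α` in `C`), then there is no `β > α` such that `P` is
`β`-grounded; in particular no countable product of copies of `M^α` exists in the
category `G` of grounded objects. -/
theorem stmt16
    (hf_id : ∀ i (x : k i), f i i le_rfl x = x)
    (hf_comp : ∀ i j l (h₁ : i ≤ j) (h₂ : j ≤ l) (x : k i),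
      f j l h₂ (f i j h₁ x) = f i l (h₁.trans h₂) x)
    (hinf : ∀ i j (h : i ≤ j), i < j → ∀ s : Finset (k j),
      ∃ x : k j, ¬ ∃ c : k j → k i, x = ∑ a ∈ s, f i j h (c a) * a)
    (hub : ∀ i : J, ∃ i', i < i')
    (α : J) (P : ChainObj k f)
    (π : ℕ → ChainHom P (Mj hf_id hf_comp α))
    (huniv : ∀ W : ChainObj k f,
      Function.Bijective (fun ψ : ChainHom W P => fun n => (π n).comp ψ)) :
    ¬ ∃ β, α < β ∧ IsGrounded β P := by
  rintro ⟨β, hαβ, hβ⟩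
  obtain ⟨γ, hβγ⟩ := hub β
  obtain ⟨x, hx⟩ := (f β γ hβγ.le).exists_seq_not_mem_finite_span (hinf β γ _ hβγ)
  obtain ⟨p, hp⟩ := Mj.exists_val_app_eq_of_surjective (hαβ.trans hβγ).le π (huniv _).2 x
  obtain ⟨m, a, ha⟩ := Mj.exists_forall_val_app_eq_sum (α := α) hβγ.le
    (hβ γ hβγ ▸ Submodule.mem_top : p ∈ Submodule.span (k γ) (Set.range (P.t β γ hβγ.le)))
  exact hx m a fun n => hp n ▸ ha (π n)
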